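/- arXiv:2103.10953 — 6 statements merged into one kernel-verified Lean document; each statement's English description precedes it below -/
import Mathlib

section
/- Let T : E → E' be a morphism of spectral sequences of abelian groups and let n be an integer. Suppose that T_2^{s,t} is injective for all s ≤ n−1 and bijective for all s ≤ n−2 (for all t). Then for every r ≥ 2: (i) T_r^{s,t} is injective for all s ≤ n−1 and all t, and (ii) T_r^{s,t} is bijective for all s ≤ n−1−(r−1) and all t. (This is the comparison lemma for the map from the spectral sequence of a tower of cofibrations to that of its n-truncated tower, whose E_2-term satisfies exactly these hypotheses.) -/
/-- A spectral sequence of abelian groups in cohomological Adams indexing: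
pages `E r s t` (for `r ≥ 2`; lower pages are irrelevant), differentials
`d r` of bidegree `(r, r - 1)` squaring to zero, and an identification of the
`(r+1)`-st page with the homology of the `r`-th page, encoded by the map
`pageMap` sending a `d r`-cycle to its class in `E (r+1)`, which is additive,
surjective, and kills exactly the `d r`-boundaries. -/
structure SpectralSequence (E : ℕ → ℤ → ℤ → Type)
    [∀ r s t, AddCommGroup (E r s t)] where
  d : ∀ (r : ℕ) (s t : ℤ), E r s t →+ E r (s + r) (t + r - 1)
  d_d : ∀ (r : ℕ) (s t : ℤ) (x : E r s t),
    d r (s + r) (t + r - 1) (d r s t x) = 0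
  pageMap : ∀ (r : ℕ) (s t : ℤ) (x : E r s t), d r s t x = 0 → E (r + 1) s t
  pageMap_add : ∀ (r : ℕ) (s t : ℤ) (x y : E r s t)
    (hx : d r s t x = 0) (hy : d r s t y = 0) (hxy : d r s t (x + y) = 0),
    pageMap r s t (x + y) hxy = pageMap r s t x hx + pageMap r s t y hy
  pageMap_surjective : ∀ (r : ℕ) (s t : ℤ) (y : E (r + 1) s t),
    ∃ (x : E r s t) (hx : d r s t x = 0), pageMap r s t x hx = y
  pageMap_eq_zero_iff : ∀ (r : ℕ) (s t : ℤ) (x : E r s t) (hx : d r s t x = 0),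
    pageMap r s t x hx = 0 ↔
      ∃ (s' t' : ℤ) (h : s' + (r : ℤ) = s) (h' : t' + (r : ℤ) - 1 = t)
        (w : E r s' t'),
        cast (congrArg₂ (E r) h h') (d r s' t' w) = x

/-- A morphism of spectral sequences of abelian groups: a family of group
homomorphisms commuting with the differentials and compatible with the
identification of the `(r+1)`-st pages with the homology of the `r`-th pages. -/
structure SpectralSequenceHom {E E' : ℕ → ℤ → ℤ → Type}
    [∀ r s t, AddCommGroup (E r s t)] [∀ r s t, AddCommGroup (E' r s t)]
    (SS : SpectralSequence E) (SS' : SpectralSequence E') where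
  T : ∀ (r : ℕ) (s t : ℤ), E r s t →+ E' r s t
  comm_d : ∀ (r : ℕ) (s t : ℤ) (x : E r s t),
    SS'.d r s t (T r s t x) = T r (s + r) (t + r - 1) (SS.d r s t x)
  comm_pageMap : ∀ (r : ℕ) (s t : ℤ) (x : E r s t) (hx : SS.d r s t x = 0)
    (hx' : SS'.d r s t (T r s t x) = 0),
    T (r + 1) s t (SS.pageMap r s t x hx) = SS'.pageMap r s t (T r s t x) hx'

/-- Comparison lemma for the map to the spectral sequence of an `n`-truncated
tower: if `T₂` is injective in filtrations `s ≤ n - 1` and bijective in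
filtrations `s ≤ n - 2`, then for every `r ≥ 2`, `T_r` is injective in
filtrations `s ≤ n - 1` and bijective in filtrations `s ≤ n - 1 - (r - 1)`. -/
theorem truncated_tower_comparison {E E' : ℕ → ℤ → ℤ → Type}
    [∀ r s t, AddCommGroup (E r s t)] [∀ r s t, AddCommGroup (E' r s t)]
    {SS : SpectralSequence E} {SS' : SpectralSequence E'}
    (T : SpectralSequenceHom SS SS') (n : ℤ)
    (hinj2 : ∀ s t : ℤ, s ≤ n - 1 → Function.Injective (T.T 2 s t))
    (hbij2 : ∀ s t : ℤ, s ≤ n - 2 → Function.Bijective (T.T 2 s t)) :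
    ∀ r : ℕ, 2 ≤ r →
      (∀ s t : ℤ, s ≤ n - 1 → Function.Injective (T.T r s t)) ∧
      (∀ s t : ℤ, s ≤ n - 1 - ((r : ℤ) - 1) → Function.Bijective (T.T r s t)) := by
  intro r hr
  induction r, hr using Nat.le_induction with
  | base =>
    refine ⟨hinj2, fun s t hs => hbij2 s t ?_⟩
    have : ((2 : ℕ) : ℤ) = 2 := by norm_num
    omega
  | succ r hr ih =>
    obtain ⟨ihinj, ihbij⟩ := ih
    have key_inj : ∀ s t : ℤ, s ≤ n - 1 → Function.Injective (T.T (r + 1) s t) := by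
      intro s t hs
      rw [injective_iff_map_eq_zero]
      intro x hx0
      obtain ⟨a, ha, rfl⟩ := SS.pageMap_surjective r s t x
      have hx' : SS'.d r s t (T.T r s t a) = 0 := by
        rw [T.comm_d, ha, map_zero]
      rw [T.comm_pageMap r s t a ha hx'] at hx0
      obtain ⟨s', t', h, h', w', hw'⟩ := (SS'.pageMap_eq_zero_iff r s t _ hx').mp hx0
      subst h h'
      -- hw' : cast rfl (SS'.d r s' t' w') = T.T r _ _ a
      have hw'' : SS'.d r s' t' w' = T.T r (s' + r) (t' + r - 1) a := hw'
      have hs' : s' ≤ n - 1 - ((r : ℤ) - 1) := by omega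
      obtain ⟨w, hw⟩ := (ihbij s' t' hs').2 w'
      have hda : T.T r (s' + r) (t' + r - 1) (SS.d r s' t' w) = T.T r (s' + r) (t' + r - 1) a := by
        rw [← T.comm_d, hw, hw'']
      have hda' : SS.d r s' t' w = a := ihinj (s' + r) (t' + r - 1) (by omega) hda
      exact (SS.pageMap_eq_zero_iff r (s' + r) (t' + r - 1) a ha).mpr
        ⟨s', t', rfl, rfl, w, hda'⟩
    refine ⟨key_inj, fun s t hs => ?_⟩
    have hs1 : s ≤ n - 1 := by push_cast at hs; omega
    have hs2 : s ≤ n - 1 - ((r : ℤ) - 1) := by push_cast at hs; omega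
    refine ⟨key_inj s t hs1, fun y => ?_⟩
    obtain ⟨b, hb, rfl⟩ := SS'.pageMap_surjective r s t y
    obtain ⟨a, rfl⟩ := (ihbij s t hs2).2 b
    have hda : SS.d r s t a = 0 := by
      apply ihinj (s + r) (t + r - 1) (by push_cast at hs; omega)
      rw [← T.comm_d, hb, map_zero]
    exact ⟨SS.pageMap r s t a hda, T.comm_pageMap r s t a hda hb⟩
end

section
/- Let cT : E → E' be a morphism of spectral sequences of abelian groups and let n be an integer. Suppose that cT_2^{s,t} is surjective for all s ≥ n and bijective for all s ≥ n+1 (for all t). Then for every r ≥ 2: (i) cT_r^{s,t} is surjective for all s ≥ n and all t, and (ii) cT_r^{s,t} is bijective for all s ≥ n+r−1 and all t. (This is the comparison lemma for the map from the spectral sequence of the n-co-truncated tower of a tower of cofibrations to the spectral sequence of the original tower, whose E_2-term satisfies exactly these hypotheses.) -/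
/-- Comparison lemma for the map from the spectral sequence of an
`n`-co-truncated tower: if `cT₂` is surjective in filtrations `s ≥ n` and
bijective in filtrations `s ≥ n + 1`, then for every `r ≥ 2`, `cT_r` is
surjective in filtrations `s ≥ n` and bijective in filtrations
`s ≥ n + r - 1`. -/
theorem cotruncated_tower_comparison {E E' : ℕ → ℤ → ℤ → Type}
    [∀ r s t, AddCommGroup (E r s t)] [∀ r s t, AddCommGroup (E' r s t)]
    {SS : SpectralSequence E} {SS' : SpectralSequence E'}
    (cT : SpectralSequenceHom SS SS') (n : ℤ)
    (hsurj2 : ∀ s t : ℤ, n ≤ s → Function.Surjective (cT.T 2 s t))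
    (hbij2 : ∀ s t : ℤ, n + 1 ≤ s → Function.Bijective (cT.T 2 s t)) :
    ∀ r : ℕ, 2 ≤ r →
      (∀ s t : ℤ, n ≤ s → Function.Surjective (cT.T r s t)) ∧
      (∀ s t : ℤ, n + (r : ℤ) - 1 ≤ s → Function.Bijective (cT.T r s t)) := by

  intro r hr
  induction r, hr using Nat.le_induction with
  | base =>
    refine ⟨hsurj2, fun s t hs => hbij2 s t ?_⟩
    push_cast at hs; linarith
  | succ r hr ih =>
    obtain ⟨ihS, ihB⟩ := ih
    have surj : ∀ s t : ℤ, n ≤ s → Function.Surjective (cT.T (r + 1) s t) := by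
      intro s t hs y
      obtain ⟨y', hy', rfl⟩ := SS'.pageMap_surjective r s t y
      obtain ⟨x, rfl⟩ := ihS s t hs y'
      have hdx : SS.d r s t x = 0 := by
        have hinj : Function.Injective (cT.T r (s + r) (t + r - 1)) :=
          (ihB (s + r) (t + r - 1) (by linarith)).1
        apply hinj
        rw [map_zero, ← cT.comm_d, hy']
      exact ⟨SS.pageMap r s t x hdx, cT.comm_pageMap r s t x hdx hy'⟩
    refine ⟨surj, fun s t hs => ?_⟩
    have hs' : n + (r : ℤ) ≤ s := by push_cast at hs; linarith
    refine ⟨?_, surj s t (by linarith [Int.natCast_nonneg r])⟩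
    rw [injective_iff_map_eq_zero]
    intro ξ hξ
    obtain ⟨x, hdx, rfl⟩ := SS.pageMap_surjective r s t ξ
    have hx' : SS'.d r s t (cT.T r s t x) = 0 := by
      rw [cT.comm_d, hdx, map_zero]
    rw [cT.comm_pageMap r s t x hdx hx', SS'.pageMap_eq_zero_iff] at hξ
    obtain ⟨s', t', h, h', w', hw'⟩ := hξ
    subst h; subst h'
    obtain ⟨w, hw⟩ := ihS s' t' (by linarith) w'
    have hxw : SS.d r s' t' w = x := by
      apply (ihB (s' + r) (t' + r - 1) (by linarith)).1
      rw [← cT.comm_d, hw]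
      exact hw'
    exact (SS.pageMap_eq_zero_iff r (s' + r) (t' + r - 1) x hdx).mpr
      ⟨s', t', rfl, rfl, w, hxw⟩
end

section
/- Let E be a spectral sequence of abelian groups equipped with an operator κ̄ of bidegree (4,24), satisfying the standing hypotheses. Then for every r ≥ 2: (1) every nonzero element of E_r^{s,t} with filtration s > r−1 is κ̄-free; (2) every element of E_r^{s,t} with filtration s ≥ 4 is κ̄-divisible. -/
/-- An operator `κ̄` of bidegree `(4, 24)` on a spectral sequence: a family of
group homomorphisms commuting with the differentials and compatible with the
identification of the `(r+1)`-st pages with the homology of the `r`-th pages. -/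
structure KappaOp {E : ℕ → ℤ → ℤ → Type} [∀ r s t, AddCommGroup (E r s t)]
    (SS : SpectralSequence E) where
  κ : ∀ (r : ℕ) (s t : ℤ), E r s t →+ E r (s + 4) (t + 24)
  comm_d : ∀ (r : ℕ) (s t : ℤ) (x : E r s t),
    SS.d r (s + 4) (t + 24) (κ r s t x) =
      cast (congrArg₂ (E r) (by ring) (by ring))
        (κ r (s + r) (t + r - 1) (SS.d r s t x))
  comm_pageMap : ∀ (r : ℕ) (s t : ℤ) (x : E r s t) (hx : SS.d r s t x = 0)
    (hκx : SS.d r (s + 4) (t + 24) (κ r s t x) = 0),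
    κ (r + 1) s t (SS.pageMap r s t x hx) =
      SS.pageMap r (s + 4) (t + 24) (κ r s t x) hκx

/-- Iterates `κ̄ ^ n` of the operator `κ̄`. -/
def KappaOp.iter {E : ℕ → ℤ → ℤ → Type} [∀ r s t, AddCommGroup (E r s t)]
    {SS : SpectralSequence E} (K : KappaOp SS) (r : ℕ) (s t : ℤ) :
    (n : ℕ) → E r s t → E r (s + 4 * n) (t + 24 * n)
  | 0, x => cast (congrArg₂ (E r) (by push_cast; ring) (by push_cast; ring)) x
  | n + 1, x =>
      cast (congrArg₂ (E r) (by push_cast; ring) (by push_cast; ring))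
        (K.κ r (s + 4 * n) (t + 24 * n) (K.iter r s t n x))

/-- `x` is `κ̄`-free if `κ̄ ^ n • x ≠ 0` for all `n ≥ 0`. -/
def KappaOp.KappaFree {E : ℕ → ℤ → ℤ → Type} [∀ r s t, AddCommGroup (E r s t)]
    {SS : SpectralSequence E} (K : KappaOp SS) (r : ℕ) (s t : ℤ)
    (x : E r s t) : Prop :=
  ∀ n : ℕ, K.iter r s t n x ≠ 0

/-- `x` is `κ̄`-divisible if `x = κ̄ • y` for some `y`. -/
def KappaOp.KappaDivisible {E : ℕ → ℤ → ℤ → Type}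
    [∀ r s t, AddCommGroup (E r s t)]
    {SS : SpectralSequence E} (K : KappaOp SS) (r : ℕ) (s t : ℤ)
    (x : E r s t) : Prop :=
  ∃ (s' t' : ℤ) (h : s' + 4 = s) (h' : t' + 24 = t) (y : E r s' t'),
    cast (congrArg₂ (E r) h h') (K.κ r s' t' y) = x

/-- The standing hypotheses (satisfied by the `E₂`-term of the elliptic
spectral sequence for `tmf ∧ Y`): every nonzero element of `E₂` of filtration
`≥ 2` is `κ̄`-free, and every element of `E₂` of filtration `≥ 4` is
`κ̄`-divisible. -/
def KappaOp.StandingHypotheses {E : ℕ → ℤ → ℤ → Type}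
    [∀ r s t, AddCommGroup (E r s t)]
    {SS : SpectralSequence E} (K : KappaOp SS) : Prop :=
  (∀ (s t : ℤ) (x : E 2 s t), x ≠ 0 → 2 ≤ s → K.KappaFree 2 s t x) ∧
  (∀ (s t : ℤ) (x : E 2 s t), 4 ≤ s → K.KappaDivisible 2 s t x)

section Aux

variable {E : ℕ → ℤ → ℤ → Type} [∀ r s t, AddCommGroup (E r s t)]

private lemma Eeq_zero_congr {r : ℕ} {s t s' t' : ℤ} (h : s = s') (h' : t = t')
    {x : E r s t} {y : E r s' t'} (e : HEq x y) : x = 0 ↔ y = 0 := by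
  subst h h'; rw [eq_of_heq e]

variable {SS : SpectralSequence E}

private lemma d_congr {r : ℕ} {s t s' t' : ℤ} (h : s = s') (h' : t = t')
    {x : E r s t} {y : E r s' t'} (e : HEq x y) :
    HEq (SS.d r s t x) (SS.d r s' t' y) := by
  subst h h'; rw [eq_of_heq e]

private lemma pageMap_congr {r : ℕ} {s t s' t' : ℤ} (h : s = s') (h' : t = t')
    {x : E r s t} {y : E r s' t'} (e : HEq x y)
    (hx : SS.d r s t x = 0) (hy : SS.d r s' t' y = 0) :
    HEq (SS.pageMap r s t x hx) (SS.pageMap r s' t' y hy) := by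
  subst h h'; cases eq_of_heq e; rfl

variable (K : KappaOp SS)

private lemma κ_congr {r : ℕ} {s t s' t' : ℤ} (h : s = s') (h' : t = t')
    {x : E r s t} {y : E r s' t'} (e : HEq x y) :
    HEq (K.κ r s t x) (K.κ r s' t' y) := by
  subst h h'; rw [eq_of_heq e]

private lemma iter0_heq {r : ℕ} {s t : ℤ} (x : E r s t) :
    HEq (K.iter r s t 0 x) x := cast_heq _ _

private lemma iterS_heq {r : ℕ} {s t : ℤ} (n : ℕ) (x : E r s t) :
    HEq (K.iter r s t (n + 1) x)
      (K.κ r (s + 4 * n) (t + 24 * n) (K.iter r s t n x)) := cast_heq _ _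

private lemma kappa_comm_heq {r : ℕ} {s t : ℤ} (x : E r s t) :
    HEq (SS.d r (s + 4) (t + 24) (K.κ r s t x))
      (K.κ r (s + r) (t + r - 1) (SS.d r s t x)) := by
  rw [K.comm_d r s t x]; exact cast_heq _ _

private lemma kfree_kappa_ne {r : ℕ} {s t : ℤ} {z : E r s t}
    (hz : K.KappaFree r s t z) : K.κ r s t z ≠ 0 := by
  have e : HEq (K.iter r s t 1 z) (K.κ r s t z) :=
    (iterS_heq K 0 z).trans
      (κ_congr K (by push_cast; ring) (by push_cast; ring) (iter0_heq K z))
  exact fun h0 =>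
    hz 1 ((Eeq_zero_congr (by push_cast; ring) (by push_cast; ring) e).mpr h0)

private lemma d_iter {r : ℕ} {s t : ℤ} {x : E r s t} (hx : SS.d r s t x = 0) :
    ∀ n : ℕ, SS.d r (s + 4 * n) (t + 24 * n) (K.iter r s t n x) = 0 := by
  intro n
  induction n with
  | zero =>
      rw [Eeq_zero_congr (show s + 4 * ((0:ℕ):ℤ) + r = s + r by push_cast; ring)
        (show t + 24 * ((0:ℕ):ℤ) + r - 1 = t + r - 1 by push_cast; ring)
        (d_congr (by push_cast; ring) (by push_cast; ring) (iter0_heq K x))]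
      exact hx
  | succ n ih =>
      have e1 : HEq (SS.d r (s + 4 * ((n+1:ℕ):ℤ)) (t + 24 * ((n+1:ℕ):ℤ))
            (K.iter r s t (n+1) x))
          (SS.d r (s + 4 * n + 4) (t + 24 * n + 24)
            (K.κ r (s + 4 * n) (t + 24 * n) (K.iter r s t n x))) :=
        d_congr (by push_cast; ring) (by push_cast; ring) (iterS_heq K n x)
      have e2 := kappa_comm_heq K (K.iter r s t n x)
      rw [Eeq_zero_congr (by push_cast; ring) (by push_cast; ring) (e1.trans e2),
        ih, map_zero]

private lemma d_kappa_iter {r : ℕ} {s t : ℤ} {x : E r s t}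
    (hx : SS.d r s t x = 0) (n : ℕ) :
    SS.d r (s + 4 * n + 4) (t + 24 * n + 24)
      (K.κ r (s + 4 * n) (t + 24 * n) (K.iter r s t n x)) = 0 := by
  rw [Eeq_zero_congr (by ring) (by ring)
    (kappa_comm_heq K (K.iter r s t n x)), d_iter K hx n, map_zero]

private lemma pageMap_iter {r : ℕ} {s t : ℤ} {x : E r s t}
    (hx : SS.d r s t x = 0) :
    ∀ n : ℕ, K.iter (r+1) s t n (SS.pageMap r s t x hx) =
      SS.pageMap r (s + 4 * n) (t + 24 * n) (K.iter r s t n x)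
        (d_iter K hx n) := by
  intro n
  induction n with
  | zero =>
      refine eq_of_heq ((iter0_heq K _).trans ?_)
      exact pageMap_congr (by push_cast; ring) (by push_cast; ring)
        (iter0_heq K x).symm hx (d_iter K hx 0)
  | succ n ih =>
      refine eq_of_heq (((iterS_heq K n _).trans ?_))
      rw [ih, K.comm_pageMap r (s + 4*n) (t + 24*n) (K.iter r s t n x)
        (d_iter K hx n) (d_kappa_iter K hx n)]
      exact pageMap_congr (by push_cast; ring) (by push_cast; ring)
        (iterS_heq K n x).symm (d_kappa_iter K hx n) (d_iter K hx (n+1))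

/-- `x` is a `d r`-boundary. -/
private def Bdry (SS : SpectralSequence E) (r : ℕ) (s t : ℤ) (x : E r s t) :
    Prop :=
  ∃ (s' t' : ℤ) (h : s' + (r : ℤ) = s) (h' : t' + (r : ℤ) - 1 = t)
    (w : E r s' t'), cast (congrArg₂ (E r) h h') (SS.d r s' t' w) = x

private lemma Bdry_congr {r : ℕ} {s t s' t' : ℤ} (h : s = s') (h' : t = t')
    {x : E r s t} {y : E r s' t'} (e : HEq x y)
    (hb : Bdry SS r s t x) : Bdry SS r s' t' y := by
  subst h h'; rwa [eq_of_heq e] at hb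

private lemma pageMap_eq_zero_iff' {r : ℕ} {s t : ℤ} (x : E r s t)
    (hx : SS.d r s t x = 0) :
    SS.pageMap r s t x hx = 0 ↔ Bdry SS r s t x :=
  SS.pageMap_eq_zero_iff r s t x hx

private lemma descent {r : ℕ}
    (Hfree : ∀ (s t : ℤ) (x : E r s t), x ≠ 0 → (r:ℤ) - 1 < s →
      K.KappaFree r s t x)
    (Hdiv : ∀ (s t : ℤ) (x : E r s t), 4 ≤ s → K.KappaDivisible r s t x)
    {s t : ℤ} (hs : (r:ℤ) < s) (x : E r s t) :
    ∀ n : ℕ, Bdry SS r (s + 4 * n) (t + 24 * n) (K.iter r s t n x) →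
      Bdry SS r s t x := by
  intro n
  induction n with
  | zero =>
      intro hb
      exact Bdry_congr (by push_cast; ring) (by push_cast; ring)
        (iter0_heq K x) hb
  | succ n ih =>
      rintro ⟨s₀, t₀, h, h', w, hw⟩
      have hw' : HEq (SS.d r s₀ t₀ w) (K.iter r s t (n+1) x) :=
        cast_eq_iff_heq.mp hw
      have hs₀ : (4:ℤ) ≤ s₀ := by push_cast at h; omega
      obtain ⟨s₁, t₁, h₁, h₁', v, hv⟩ := Hdiv s₀ t₀ w hs₀
      have hv' : HEq (K.κ r s₁ t₁ v) w := cast_eq_iff_heq.mp hv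
      have hu : s₁ + (r:ℤ) = s + 4 * n := by push_cast at h ⊢; omega
      have hu' : t₁ + (r:ℤ) - 1 = t + 24 * n := by push_cast at h' ⊢; omega
      set u : E r (s + 4 * n) (t + 24 * n) :=
        cast (congrArg₂ (E r) hu hu') (SS.d r s₁ t₁ v) with hudef
      have hu_heq : HEq u (SS.d r s₁ t₁ v) := cast_heq _ _
      have chain : HEq (K.κ r (s + 4*n) (t + 24*n) u)
          (K.κ r (s + 4*n) (t + 24*n) (K.iter r s t n x)) := by
        refine (κ_congr K hu.symm hu'.symm hu_heq).trans ?_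
        refine ((kappa_comm_heq K v).symm.trans ?_)
        refine (d_congr h₁ h₁' hv').trans ?_
        exact hw'.trans (iterS_heq K n x)
      by_cases hz : K.iter r s t n x - u = 0
      · exact ih ⟨s₁, t₁, hu, hu', v, (sub_eq_zero.mp hz).symm⟩
      · exfalso
        have hfree := Hfree _ _ _ hz (by omega)
        apply kfree_kappa_ne K hfree
        rw [map_sub, eq_of_heq chain, sub_self]

end Aux

/-- For a spectral sequence with a `κ̄`-operator of bidegree `(4,24)`
satisfying the standing hypotheses, for every `r ≥ 2`: (1) every nonzero
element of `E_r` of filtration `s > r - 1` is `κ̄`-free; (2) every element of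
`E_r` of filtration `s ≥ 4` is `κ̄`-divisible. -/
theorem kappaFree_and_kappaDivisible_of_standingHypotheses
    {E : ℕ → ℤ → ℤ → Type} [∀ r s t, AddCommGroup (E r s t)]
    {SS : SpectralSequence E} (K : KappaOp SS)
    (hyp : K.StandingHypotheses) :
    ∀ r : ℕ, 2 ≤ r →
      (∀ (s t : ℤ) (x : E r s t), x ≠ 0 → (r : ℤ) - 1 < s →
        K.KappaFree r s t x) ∧
      (∀ (s t : ℤ) (x : E r s t), 4 ≤ s → K.KappaDivisible r s t x) := by
  intro r hr
  induction r, hr using Nat.le_induction with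
  | base =>
      refine ⟨fun s t x hx hs => hyp.1 s t x hx ?_, fun s t x hs => hyp.2 s t x hs⟩
      push_cast at hs; omega
  | succ r hr IH =>
      obtain ⟨IHfree, IHdiv⟩ := IH
      constructor
      · intro s t x hx hs
        have hs' : (r:ℤ) < s := by push_cast at hs; omega
        obtain ⟨xb, hdxb, hpm⟩ := SS.pageMap_surjective r s t x
        intro n h0
        have hz : SS.pageMap r (s + 4*n) (t + 24*n) (K.iter r s t n xb)
            (d_iter K hdxb n) = 0 := by
          rw [← pageMap_iter K hdxb n, hpm]; exact h0
        have hb : Bdry SS r (s + 4*n) (t + 24*n) (K.iter r s t n xb) :=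
          (pageMap_eq_zero_iff' _ _).mp hz
        have hbx : Bdry SS r s t xb := descent K IHfree IHdiv hs' xb n hb
        exact hx (hpm ▸ (pageMap_eq_zero_iff' xb hdxb).mpr hbx)
      · intro s t x hs
        obtain ⟨xb, hdxb, hpm⟩ := SS.pageMap_surjective r s t x
        obtain ⟨s₁, t₁, h₁, h₁', y, hy⟩ := IHdiv s t xb hs
        have hy' : HEq (K.κ r s₁ t₁ y) xb := cast_eq_iff_heq.mp hy
        have hdκ : SS.d r (s₁ + 4) (t₁ + 24) (K.κ r s₁ t₁ y) = 0 := by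
          rw [Eeq_zero_congr (show s₁ + 4 + (r:ℤ) = s + r by omega)
            (show t₁ + 24 + (r:ℤ) - 1 = t + r - 1 by omega)
            (d_congr h₁ h₁' hy')]
          exact hdxb
        have hdy : SS.d r s₁ t₁ y = 0 := by
          by_contra hne
          have hfree := IHfree _ _ _ hne (by omega)
          apply kfree_kappa_ne K hfree
          rw [Eeq_zero_congr (show s₁ + (r:ℤ) + 4 = s₁ + 4 + r by ring)
            (show t₁ + (r:ℤ) - 1 + 24 = t₁ + 24 + r - 1 by ring)
            (kappa_comm_heq K y).symm]
          exact hdκ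
        refine ⟨s₁, t₁, h₁, h₁', SS.pageMap r s₁ t₁ y hdy, ?_⟩
        rw [K.comm_pageMap r s₁ t₁ y hdy hdκ, cast_eq_iff_heq]
        exact (pageMap_congr h₁ h₁' hy' hdκ hdxb).trans (heq_of_eq hpm)
end

section
/- Let E be a spectral sequence of abelian groups equipped with an operator κ̄ of bidegree (4,24), satisfying the standing hypotheses, and assume additionally that E_2^{s,t} = 0 whenever s < 0. Let r ≥ 2 and let a ∈ E_r^{s,t} be a nonzero element with κ̄^n a = 0 for some n ≥ 1. Then a survives to the E_{r'}-page for every r' ≥ r, and moreover, setting a_r = a and inductively a_{ρ+1} = the class of a_ρ in E_{ρ+1}^{s,t}, one has a_{r'} ≠ 0 in E_{r'}^{s,t} for every r' ≥ r. (In other words, every nonzero κ̄-power-torsion class is a permanent cycle, is never a boundary, and survives to E_∞.) -/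
/-- `SS.IsClassOf s t r x r' y` says that `x ∈ E r` survives to the page
`E r'` and that `y` is its class there: setting `x_r = x` and inductively
`x_{ρ+1}` the class of `x_ρ` (which requires `d_ρ x_ρ = 0`), one has
`y = x_{r'}`. -/
inductive SpectralSequence.IsClassOf {E : ℕ → ℤ → ℤ → Type}
    [∀ r s t, AddCommGroup (E r s t)] (SS : SpectralSequence E) (s t : ℤ) :
    (r : ℕ) → E r s t → (r' : ℕ) → E r' s t → Prop
  | refl (r : ℕ) (x : E r s t) : SpectralSequence.IsClassOf SS s t r x r x
  | step {r r' : ℕ} {x : E r s t} {y : E r' s t} (hy : SS.d r' s t y = 0)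
      (h : SpectralSequence.IsClassOf SS s t r x r' y) :
      SpectralSequence.IsClassOf SS s t r x (r' + 1) (SS.pageMap r' s t y hy)

/-!
Every page `E_r` (`r ≥ 2`) inherits three properties from `E_2`: it vanishes in negative
filtration, `κ̄` is onto filtrations `≥ 4`, and `κ̄` is injective on filtrations `≥ r`.
Injectivity passes from `E_r` to `E_{r+1}` because if `κ̄ [z] = 0` then `κ̄ z = d w` with `w`
in filtration `≥ 4`, so `w = κ̄ w'` and `κ̄ (z - d w') = 0`, whence `z = d w'`.

A `κ̄`-power-torsion class `y ∈ E_r^{s,t}` then has `d_r y = 0`, since `d_r y` is torsion in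
filtration `s + r ≥ r`. If `y ≠ 0`, injectivity forces `s < r`, so a boundary hitting `y` would
come from negative filtration and `y` is not a boundary. Torsion passes to the class of `y`,
which gives the induction on the page.
-/

theorem cast_congrArg₂_eq_zero_iff {F : ℤ → ℤ → Type} [∀ s t, Zero (F s t)]
    {s t s' t' : ℤ} (h : s = s') (h' : t = t') (x : F s t) :
    cast (congrArg₂ F h h') x = 0 ↔ x = 0 := by
  subst h h'
  rfl

theorem eq_zero_iff_of_heq {F : ℤ → ℤ → Type} [∀ s t, Zero (F s t)] {s t s' t' : ℤ}
    (h : s = s') (h' : t = t') {x : F s t} {y : F s' t'} (e : HEq x y) : x = 0 ↔ y = 0 := by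
  subst h h'
  rw [eq_of_heq e]

variable {E : ℕ → ℤ → ℤ → Type} [∀ r s t, AddCommGroup (E r s t)]
  {SS : SpectralSequence E}

namespace SpectralSequence

theorem pageMap_eq_zero_of_eq_zero {r : ℕ} {s t : ℤ} {x : E r s t} (hx0 : x = 0)
    (hx : SS.d r s t x = 0) : SS.pageMap r s t x hx = 0 := by
  subst hx0
  refine (SS.pageMap_eq_zero_iff r s t 0 hx).mpr ⟨s - r, t - r + 1, by ring, by ring, 0, ?_⟩
  rw [map_zero, cast_congrArg₂_eq_zero_iff (by ring) (by ring)]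

theorem subsingleton_succ (SS : SpectralSequence E) {r : ℕ} {s t : ℤ} [Subsingleton (E r s t)] :
    Subsingleton (E (r + 1) s t) := by
  refine subsingleton_of_forall_eq 0 fun y => ?_
  obtain ⟨x, hx, rfl⟩ := SS.pageMap_surjective r s t y
  exact pageMap_eq_zero_of_eq_zero (Subsingleton.elim x 0) hx

end SpectralSequence

namespace KappaOp

variable (K : KappaOp SS)

theorem κ_heq_κ {r : ℕ} {s t s' t' : ℤ} (h : s = s') (h' : t = t') {x : E r s t}
    {y : E r s' t'} (e : HEq x y) : HEq (K.κ r s t x) (K.κ r s' t' y) := by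
  subst h h'
  rw [eq_of_heq e]

theorem d_κ_eq_zero_iff {r : ℕ} {s t : ℤ} (x : E r s t) :
    SS.d r (s + 4) (t + 24) (K.κ r s t x) = 0 ↔
      K.κ r (s + r) (t + r - 1) (SS.d r s t x) = 0 := by
  rw [K.comm_d, cast_congrArg₂_eq_zero_iff (by ring) (by ring)]

theorem iter_zero_eq_zero_iff {r : ℕ} {s t : ℤ} (x : E r s t) :
    K.iter r s t 0 x = 0 ↔ x = 0 :=
  cast_congrArg₂_eq_zero_iff (by simp) (by simp) x

theorem iter_succ_heq (r n : ℕ) (s t : ℤ) (x : E r s t) :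
    HEq (K.iter r s t (n + 1) x) (K.iter r (s + 4) (t + 24) n (K.κ r s t x)) := by
  induction n with
  | zero =>
    refine (cast_heq _ _).trans ?_
    exact (K.κ_heq_κ (by simp) (by simp) (cast_heq _ x)).trans (cast_heq _ _).symm
  | succ n ih =>
    refine (cast_heq _ _).trans ?_
    exact (K.κ_heq_κ (by push_cast; ring) (by push_cast; ring) ih).trans (cast_heq _ _).symm

theorem iter_succ_eq_zero_iff {r n : ℕ} {s t : ℤ} (x : E r s t) :
    K.iter r s t (n + 1) x = 0 ↔ K.iter r (s + 4) (t + 24) n (K.κ r s t x) = 0 :=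
  eq_zero_iff_of_heq (by push_cast; ring) (by push_cast; ring) (K.iter_succ_heq r n s t x)

theorem iter_cast_eq_zero_iff {r n : ℕ} {s t s' t' : ℤ} (h : s = s') (h' : t = t')
    (x : E r s t) :
    K.iter r s' t' n (cast (congrArg₂ (E r) h h') x) = 0 ↔ K.iter r s t n x = 0 := by
  subst h h'
  rfl

theorem iter_d_eq_zero {r n : ℕ} {s t : ℤ} {x : E r s t} (hx : K.iter r s t n x = 0) :
    K.iter r (s + r) (t + r - 1) n (SS.d r s t x) = 0 := by
  induction n generalizing s t with
  | zero => rw [iter_zero_eq_zero_iff] at hx ⊢; rw [hx, map_zero]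
  | succ n ih =>
    rw [iter_succ_eq_zero_iff] at hx ⊢
    have := ih hx
    rw [K.comm_d] at this
    exact (K.iter_cast_eq_zero_iff (by ring) (by ring) _).mp this

theorem iter_pageMap_eq_zero {r n : ℕ} {s t : ℤ} {x : E r s t} (hx : SS.d r s t x = 0)
    (hxn : K.iter r s t n x = 0) : K.iter (r + 1) s t n (SS.pageMap r s t x hx) = 0 := by
  induction n generalizing s t with
  | zero =>
    rw [iter_zero_eq_zero_iff] at hxn ⊢
    exact SS.pageMap_eq_zero_of_eq_zero hxn hx
  | succ n ih =>
    rw [iter_succ_eq_zero_iff] at hxn ⊢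
    have hκx : SS.d r (s + 4) (t + 24) (K.κ r s t x) = 0 := by
      rw [d_κ_eq_zero_iff, hx, map_zero]
    rw [K.comm_pageMap r s t x hx hκx]
    exact ih hκx hxn

theorem eq_zero_of_iter_eq_zero {r n : ℕ} {s t : ℤ}
    (hinj : ∀ s t : ℤ, r ≤ s → Function.Injective (K.κ r s t)) (hs : r ≤ s) {x : E r s t}
    (hx : K.iter r s t n x = 0) : x = 0 := by
  induction n generalizing s t with
  | zero => exact (K.iter_zero_eq_zero_iff x).mp hx
  | succ n ih =>
    rw [iter_succ_eq_zero_iff] at hx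
    exact (injective_iff_map_eq_zero _).mp (hinj s t hs) x (ih (by omega) hx)

structure PageInvariant (r : ℕ) : Prop where
  subsingleton_of_neg : ∀ s t : ℤ, s < 0 → Subsingleton (E r s t)
  divisible : ∀ (s t : ℤ) (x : E r s t), 4 ≤ s → K.KappaDivisible r s t x
  injective : ∀ s t : ℤ, r ≤ s → Function.Injective (K.κ r s t)

variable {K}

theorem pageInvariant_two (hyp : K.StandingHypotheses)
    (hneg : ∀ s t : ℤ, s < 0 → ∀ x : E 2 s t, x = 0) : K.PageInvariant 2 where
  subsingleton_of_neg s t hs := subsingleton_of_forall_eq 0 (hneg s t hs)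
  divisible := hyp.2
  injective s t hs := by
    refine (injective_iff_map_eq_zero _).mpr fun x hx => ?_
    by_contra hx0
    exact hyp.1 s t x hx0 hs 1
      ((K.iter_succ_eq_zero_iff x).mpr ((K.iter_zero_eq_zero_iff _).mpr hx))

namespace PageInvariant

variable {r : ℕ} (hK : K.PageInvariant r)
include hK

theorem divisible_succ {s t : ℤ} (ξ : E (r + 1) s t) (hs : 4 ≤ s) :
    K.KappaDivisible (r + 1) s t ξ := by
  obtain ⟨x, hx, rfl⟩ := SS.pageMap_surjective r s t ξ
  obtain ⟨s₀, t₀, rfl, rfl, z, rfl⟩ := hK.divisible s t x hs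
  have hκz : SS.d r (s₀ + 4) (t₀ + 24) (K.κ r s₀ t₀ z) = 0 := hx
  have hdz : SS.d r s₀ t₀ z = 0 :=
    (injective_iff_map_eq_zero _).mp (hK.injective _ _ (by omega)) _
      ((K.d_κ_eq_zero_iff z).mp hκz)
  exact ⟨s₀, t₀, rfl, rfl, _, K.comm_pageMap r s₀ t₀ z hdz hκz⟩

theorem injective_succ {s t : ℤ} (hs : r + 1 ≤ s) :
    Function.Injective (K.κ (r + 1) s t) := by
  refine (injective_iff_map_eq_zero _).mpr fun τ hτ => ?_
  obtain ⟨z, hz, rfl⟩ := SS.pageMap_surjective r s t τ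
  have hκz : SS.d r (s + 4) (t + 24) (K.κ r s t z) = 0 := by
    rw [K.d_κ_eq_zero_iff, hz, map_zero]
  rw [K.comm_pageMap r s t z hz hκz] at hτ
  obtain ⟨s₁, t₁, hs₁, ht₁, w, hw⟩ := (SS.pageMap_eq_zero_iff r _ _ _ hκz).mp hτ
  obtain ⟨s₂, t₂, rfl, rfl, w', rfl⟩ := hK.divisible s₁ t₁ w (by omega)
  obtain rfl : s = s₂ + r := by omega
  obtain rfl : t = t₂ + r - 1 := by omega
  rw [cast_eq, K.comm_d, cast_cast, cast_eq] at hw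
  have hwz : SS.d r s₂ t₂ w' = z := hK.injective _ _ (by omega) hw
  exact (SS.pageMap_eq_zero_iff r _ _ z hz).mpr ⟨s₂, t₂, rfl, rfl, w', hwz⟩

theorem succ : K.PageInvariant (r + 1) where
  subsingleton_of_neg s t hs :=
    have := hK.subsingleton_of_neg s t hs
    SS.subsingleton_succ
  divisible _ _ := hK.divisible_succ
  injective _ _ := hK.injective_succ

theorem d_eq_zero_of_iter_eq_zero {n : ℕ} {s t : ℤ} {y : E r s t}
    (hy : K.iter r s t n y = 0) : SS.d r s t y = 0 := by
  rcases lt_or_ge s 0 with hs | hs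
  · have := hK.subsingleton_of_neg s t hs
    rw [Subsingleton.elim y 0, map_zero]
  · exact K.eq_zero_of_iter_eq_zero hK.injective (by omega) (K.iter_d_eq_zero hy)

theorem pageMap_ne_zero_of_iter_eq_zero {n : ℕ} {s t : ℤ} {y : E r s t}
    (hy : K.iter r s t n y = 0) (hy0 : y ≠ 0) (hd : SS.d r s t y = 0) :
    SS.pageMap r s t y hd ≠ 0 := by
  have hsr : s < r := by
    by_contra! hrs
    exact hy0 (K.eq_zero_of_iter_eq_zero hK.injective hrs hy)
  intro h0
  obtain ⟨s', t', rfl, rfl, w, rfl⟩ := (SS.pageMap_eq_zero_iff r s t y hd).mp h0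
  have := hK.subsingleton_of_neg s' t' (by omega)
  rw [Subsingleton.elim w 0, map_zero, cast_eq] at hy0
  exact hy0 rfl

end PageInvariant

theorem pageInvariant (hyp : K.StandingHypotheses)
    (hneg : ∀ s t : ℤ, s < 0 → ∀ x : E 2 s t, x = 0) {r : ℕ} (hr : 2 ≤ r) :
    K.PageInvariant r := by
  induction r, hr using Nat.le_induction with
  | base => exact pageInvariant_two hyp hneg
  | succ r _ ih => exact ih.succ

end KappaOp

theorem kappaTorsion_survives_general {E : ℕ → ℤ → ℤ → Type}
    [∀ r s t, AddCommGroup (E r s t)]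
    {SS : SpectralSequence E} (K : KappaOp SS)
    (hyp : K.StandingHypotheses)
    (hneg : ∀ s t : ℤ, s < 0 → ∀ x : E 2 s t, x = 0)
    (r : ℕ) (hr : 2 ≤ r) (s t : ℤ) (a : E r s t) (ha : a ≠ 0)
    (n : ℕ) (htor : K.iter r s t n a = 0) :
    ∀ r' : ℕ, r ≤ r' →
      ∃ y : E r' s t, SS.IsClassOf s t r a r' y ∧ y ≠ 0 := by
  suffices ∀ r' : ℕ, r ≤ r' →
      ∃ y : E r' s t, SS.IsClassOf s t r a r' y ∧ y ≠ 0 ∧ K.iter r' s t n y = 0 from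
    fun r' hr' => (this r' hr').imp fun _ hy => ⟨hy.1, hy.2.1⟩
  intro r' hr'
  induction r', hr' using Nat.le_induction with
  | base => exact ⟨a, .refl r a, ha, htor⟩
  | succ ρ hρ ih =>
    obtain ⟨y, hy, hy0, hyn⟩ := ih
    have hK := K.pageInvariant hyp hneg (hr.trans hρ)
    have hd := hK.d_eq_zero_of_iter_eq_zero hyn
    exact ⟨_, hy.step hd, hK.pageMap_ne_zero_of_iter_eq_zero hyn hy0 hd,
      K.iter_pageMap_eq_zero hd hyn⟩

/-- For a spectral sequence with a `κ̄`-operator of bidegree `(4,24)`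
satisfying the standing hypotheses, and with `E₂` vanishing in negative
filtrations: every nonzero `κ̄`-power-torsion class `a ∈ E_r` (`r ≥ 2`)
survives to every later page with nonzero classes; i.e. it is a permanent
cycle, never a boundary, and survives to `E_∞`. -/
theorem kappaTorsion_survives {E : ℕ → ℤ → ℤ → Type}
    [∀ r s t, AddCommGroup (E r s t)]
    {SS : SpectralSequence E} (K : KappaOp SS)
    (hyp : K.StandingHypotheses)
    (hneg : ∀ s t : ℤ, s < 0 → ∀ x : E 2 s t, x = 0)
    (r : ℕ) (hr : 2 ≤ r) (s t : ℤ) (a : E r s t) (ha : a ≠ 0)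
    (n : ℕ) (hn : 1 ≤ n) (htor : K.iter r s t n a = 0) :
    ∀ r' : ℕ, r ≤ r' →
      ∃ y : E r' s t, SS.IsClassOf s t r a r' y ∧ y ≠ 0 :=
  kappaTorsion_survives_general K hyp hneg r hr s t a ha n htor
end

section
/- Let E be a spectral sequence of abelian groups equipped with an operator κ̄ of bidegree (4,24), satisfying the standing hypotheses, and assume additionally that E_2^{s,t} = 0 whenever s < 0. Let r ≥ 2, let l ≥ 1, and let a ∈ E_r. If there exists b ∈ E_r of filtration ≥ 4 with d_r(b) = κ̄^l a, then there exists c ∈ E_r with d_r(c) = κ̄^{l−1} a. Consequently, if l is minimal such that κ̄^l a is a d_r-boundary, then every b ∈ E_r with d_r(b) = κ̄^l a has filtration ≤ 3. -/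
section KDHelpers

variable {E : ℕ → ℤ → ℤ → Type} [∀ r s t, AddCommGroup (E r s t)]
  {SS : SpectralSequence E}

private theorem kd_heq_zero_iff {r : ℕ} {s t s' t' : ℤ} (hs : s = s') (ht : t = t')
    {x : E r s t} {y : E r s' t'} (h : HEq x y) : x = 0 ↔ y = 0 := by
  subst hs; subst ht; rw [eq_of_heq h]

private theorem kd_d_hcongr {r : ℕ} {s t s' t' : ℤ} (hs : s = s') (ht : t = t')
    {x : E r s t} {y : E r s' t'} (h : HEq x y) :
    HEq (SS.d r s t x) (SS.d r s' t' y) := by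
  subst hs; subst ht; rw [eq_of_heq h]

private theorem kd_κ_hcongr (K : KappaOp SS) {r : ℕ} {s t s' t' : ℤ}
    (hs : s = s') (ht : t = t') {x : E r s t} {y : E r s' t'} (h : HEq x y) :
    HEq (K.κ r s t x) (K.κ r s' t' y) := by
  subst hs; subst ht; rw [eq_of_heq h]

private theorem kd_comm_d_heq (K : KappaOp SS) (r : ℕ) (s t : ℤ) (x : E r s t) :
    HEq (SS.d r (s + 4) (t + 24) (K.κ r s t x))
        (K.κ r (s + r) (t + r - 1) (SS.d r s t x)) := by
  rw [K.comm_d r s t x]; exact cast_heq _ _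

private theorem kd_iter_zero_heq (K : KappaOp SS) (r : ℕ) (s t : ℤ) (x : E r s t) :
    HEq (K.iter r s t 0 x) x := cast_heq _ _

private theorem kd_iter_succ_heq (K : KappaOp SS) (r : ℕ) (s t : ℤ) (n : ℕ) (x : E r s t) :
    HEq (K.iter r s t (n + 1) x)
        (K.κ r (s + 4 * n) (t + 24 * n) (K.iter r s t n x)) := cast_heq _ _

private theorem kd_eq_cast_of_heq {r : ℕ} {a b c d : ℤ} (ha : c = a) (hb : d = b)
    {x : E r c d} {y : E r a b} (h : HEq x y) :
    cast (congrArg₂ (E r) ha hb) x = y := by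
  subst ha; subst hb; exact eq_of_heq h

private theorem kd_pageMap_congr {r : ℕ} {s t : ℤ} {x y : E r s t} (hxy : x = y)
    (hx : SS.d r s t x = 0) (hy : SS.d r s t y = 0) :
    SS.pageMap r s t x hx = SS.pageMap r s t y hy := by subst hxy; rfl

/-- Key inductive lemma: on every page `p ≥ 2`, `κ̄` is injective in
filtrations `≥ p`, and every element of filtration `≥ 4` is `κ̄`-divisible. -/
private theorem kd_key (K : KappaOp SS) (hyp : K.StandingHypotheses)
    (p : ℕ) (hp : 2 ≤ p) :
    (∀ (s t : ℤ) (x : E p s t), (p : ℤ) ≤ s → K.κ p s t x = 0 → x = 0) ∧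
    (∀ (s t : ℤ), 0 ≤ s → ∀ x : E p (s + 4) (t + 24),
      ∃ y : E p s t, K.κ p s t y = x) := by
  induction p, hp using Nat.le_induction with
  | base =>
    constructor
    · intro s t x hs hx
      by_contra hne
      have hfree := hyp.1 s t x hne (by exact_mod_cast hs)
      refine hfree 1 ?_
      have e0 := kd_iter_succ_heq K 2 s t 0 x
      have e1 : HEq (K.κ 2 (s + 4 * ((0:ℕ):ℤ)) (t + 24 * ((0:ℕ):ℤ)) (K.iter 2 s t 0 x))
          (K.κ 2 s t x) :=
        kd_κ_hcongr K (by push_cast; ring) (by push_cast; ring) (kd_iter_zero_heq K 2 s t x)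
      exact (kd_heq_zero_iff (by push_cast; ring) (by push_cast; ring)
        (e0.trans e1)).mpr hx
    · intro s t hs x
      obtain ⟨s', t', h, h', y, hy⟩ := hyp.2 (s + 4) (t + 24) x (by omega)
      have hs' : s' = s := by omega
      have ht' : t' = t := by omega
      subst hs'; subst ht'
      exact ⟨y, eq_of_heq (heq_of_cast_eq _ hy)⟩
  | succ p hp ih =>
    obtain ⟨Inj, Div⟩ := ih
    constructor
    · -- injectivity on page p+1 in filtrations ≥ p+1
      intro s t x hs hx
      obtain ⟨xt, hdxt, hpm⟩ := SS.pageMap_surjective p s t x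
      have hκcyc : SS.d p (s + 4) (t + 24) (K.κ p s t xt) = 0 := by
        have e := kd_comm_d_heq K p s t xt
        rw [hdxt, map_zero] at e
        exact (kd_heq_zero_iff (by ring) (by ring) e).mpr rfl
      have h0 : SS.pageMap p (s + 4) (t + 24) (K.κ p s t xt) hκcyc = 0 := by
        rw [← K.comm_pageMap p s t xt hdxt hκcyc, hpm, hx]
      obtain ⟨s', t', h, h', w, hw⟩ :=
        (SS.pageMap_eq_zero_iff p (s + 4) (t + 24) _ hκcyc).mp h0
      have e1 : s' = s' - 4 + 4 := by ring
      have e2 : t' = t' - 24 + 24 := by ring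
      obtain ⟨v, hv⟩ := Div (s' - 4) (t' - 24) (by omega)
        (cast (congrArg₂ (E p) e1 e2) w)
      have hbheq : HEq (K.κ p (s' - 4) (t' - 24) v) w := by
        rw [hv]; exact cast_heq _ _
      have c1 : HEq (K.κ p (s' - 4 + p) (t' - 24 + p - 1) (SS.d p (s' - 4) (t' - 24) v))
          (K.κ p s t xt) :=
        (kd_comm_d_heq K p (s' - 4) (t' - 24) v).symm.trans
          ((kd_d_hcongr (by ring) (by ring) hbheq).trans (heq_of_cast_eq _ hw))
      have eA : s = s' - 4 + p := by omega
      have eB : t = t' - 24 + p - 1 := by omega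
      have c3 : HEq (K.κ p (s' - 4 + p) (t' - 24 + p - 1)
          (cast (congrArg₂ (E p) eA eB) xt)) (K.κ p s t xt) :=
        kd_κ_hcongr K eA.symm eB.symm (cast_heq _ _)
      have hEq : K.κ p (s' - 4 + p) (t' - 24 + p - 1) (SS.d p (s' - 4) (t' - 24) v) =
          K.κ p (s' - 4 + p) (t' - 24 + p - 1) (cast (congrArg₂ (E p) eA eB) xt) :=
        eq_of_heq (c1.trans c3.symm)
      have hdv : SS.d p (s' - 4) (t' - 24) v = cast (congrArg₂ (E p) eA eB) xt :=
        sub_eq_zero.mp (Inj (s' - 4 + p) (t' - 24 + p - 1) _ (by omega)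
          (by rw [map_sub, hEq, sub_self]))
      have eS : s' - 4 + (p : ℤ) = s := by omega
      have eT : t' - 24 + (p : ℤ) - 1 = t := by omega
      rw [← hpm]
      exact (SS.pageMap_eq_zero_iff p s t xt hdxt).mpr
        ⟨s' - 4, t' - 24, eS, eT, v,
          kd_eq_cast_of_heq eS eT ((heq_of_eq hdv).trans (cast_heq _ _))⟩
    · -- divisibility on page p+1
      intro s t hs x
      obtain ⟨xt, hdxt, hpm⟩ := SS.pageMap_surjective p (s + 4) (t + 24) x
      obtain ⟨yt, hyt⟩ := Div s t hs xt
      have hdyt : SS.d p s t yt = 0 := by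
        have e := kd_comm_d_heq K p s t yt
        rw [hyt, hdxt] at e
        exact Inj (s + p) (t + p - 1) _ (by omega)
          ((kd_heq_zero_iff (by ring) (by ring) e.symm).mpr rfl)
      have hκ0 : SS.d p (s + 4) (t + 24) (K.κ p s t yt) = 0 := by
        rw [hyt]; exact hdxt
      refine ⟨SS.pageMap p s t yt hdyt, ?_⟩
      rw [K.comm_pageMap p s t yt hdyt hκ0, ← hpm]
      exact kd_pageMap_congr hyt hκ0 hdxt

/-- Descent step: if `κ̄^(m+1) a` is the `d_r`-boundary of an element of
filtration `≥ 4`, then `κ̄^m a` is a `d_r`-boundary. -/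
private theorem kd_descent (K : KappaOp SS) (hyp : K.StandingHypotheses)
    (r : ℕ) (hr : 2 ≤ r) (m : ℕ) (s t : ℤ) (a : E r s t) :
    (∃ (s' t' : ℤ) (h : s' + (r : ℤ) = s + 4 * ((m + 1 : ℕ) : ℤ))
        (h' : t' + (r : ℤ) - 1 = t + 24 * ((m + 1 : ℕ) : ℤ)) (b : E r s' t'),
        4 ≤ s' ∧
        cast (congrArg₂ (E r) h h') (SS.d r s' t' b) = K.iter r s t (m + 1) a) →
      ∃ (s'' t'' : ℤ) (h : s'' + (r : ℤ) = s + 4 * (m : ℤ))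
        (h' : t'' + (r : ℤ) - 1 = t + 24 * (m : ℤ))
        (c : E r s'' t''),
        cast (congrArg₂ (E r) h h') (SS.d r s'' t'' c) = K.iter r s t m a := by
  obtain ⟨Inj, Div⟩ := kd_key K hyp r hr
  rintro ⟨s', t', h, h', b, hs4, hb⟩
  have e1 : s' = s' - 4 + 4 := by ring
  have e2 : t' = t' - 24 + 24 := by ring
  obtain ⟨c, hc⟩ := Div (s' - 4) (t' - 24) (by omega) (cast (congrArg₂ (E r) e1 e2) b)
  have hbheq : HEq (K.κ r (s' - 4) (t' - 24) c) b := by rw [hc]; exact cast_heq _ _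
  have c1 : HEq (K.κ r (s' - 4 + r) (t' - 24 + r - 1) (SS.d r (s' - 4) (t' - 24) c))
      (K.iter r s t (m + 1) a) :=
    (kd_comm_d_heq K r (s' - 4) (t' - 24) c).symm.trans
      ((kd_d_hcongr (by ring) (by ring) hbheq).trans (heq_of_cast_eq _ hb))
  have c2 : HEq (K.iter r s t (m + 1) a)
      (K.κ r (s + 4 * (m : ℤ)) (t + 24 * (m : ℤ)) (K.iter r s t m a)) :=
    kd_iter_succ_heq K r s t m a
  have eA : s + 4 * (m : ℤ) = s' - 4 + r := by omega
  have eB : t + 24 * (m : ℤ) = t' - 24 + r - 1 := by omega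
  have c3 : HEq (K.κ r (s' - 4 + r) (t' - 24 + r - 1)
      (cast (congrArg₂ (E r) eA eB) (K.iter r s t m a)))
      (K.κ r (s + 4 * (m : ℤ)) (t + 24 * (m : ℤ)) (K.iter r s t m a)) :=
    kd_κ_hcongr K eA.symm eB.symm (cast_heq _ _)
  have hEq : K.κ r (s' - 4 + r) (t' - 24 + r - 1) (SS.d r (s' - 4) (t' - 24) c) =
      K.κ r (s' - 4 + r) (t' - 24 + r - 1)
        (cast (congrArg₂ (E r) eA eB) (K.iter r s t m a)) :=
    eq_of_heq (c1.trans (c2.trans c3.symm))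
  have hdc : SS.d r (s' - 4) (t' - 24) c =
      cast (congrArg₂ (E r) eA eB) (K.iter r s t m a) :=
    sub_eq_zero.mp (Inj (s' - 4 + r) (t' - 24 + r - 1) _ (by omega)
      (by rw [map_sub, hEq, sub_self]))
  have eS : s' - 4 + (r : ℤ) = s + 4 * (m : ℤ) := by omega
  have eT : t' - 24 + (r : ℤ) - 1 = t + 24 * (m : ℤ) := by omega
  exact ⟨s' - 4, t' - 24, eS, eT, c,
    kd_eq_cast_of_heq eS eT ((heq_of_eq hdc).trans (cast_heq _ _))⟩

end KDHelpers

/-- For a spectral sequence with a `κ̄`-operator of bidegree `(4,24)`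
satisfying the standing hypotheses, and with `E₂` vanishing in negative
filtrations: if `κ̄ ^ l • a` (`l ≥ 1`) is the `d_r`-boundary of an element of
filtration `≥ 4`, then `κ̄ ^ (l - 1) • a` is also a `d_r`-boundary.
Consequently, if `l` is minimal such that `κ̄ ^ l • a` is a `d_r`-boundary,
then every `b` with `d_r b = κ̄ ^ l • a` has filtration `≤ 3`. -/
theorem kappaDivisible_boundary_descent {E : ℕ → ℤ → ℤ → Type}
    [∀ r s t, AddCommGroup (E r s t)]
    {SS : SpectralSequence E} (K : KappaOp SS)
    (hyp : K.StandingHypotheses)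
    (hneg : ∀ s t : ℤ, s < 0 → ∀ x : E 2 s t, x = 0)
    (r : ℕ) (hr : 2 ≤ r) (l : ℕ) (hl : 1 ≤ l) (s t : ℤ) (a : E r s t) :
    ((∃ (s' t' : ℤ) (h : s' + (r : ℤ) = s + 4 * (l : ℤ))
        (h' : t' + (r : ℤ) - 1 = t + 24 * (l : ℤ)) (b : E r s' t'),
        4 ≤ s' ∧
        cast (congrArg₂ (E r) h h') (SS.d r s' t' b) = K.iter r s t l a) →
      ∃ (s'' t'' : ℤ) (h : s'' + (r : ℤ) = s + 4 * ((l - 1 : ℕ) : ℤ))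
        (h' : t'' + (r : ℤ) - 1 = t + 24 * ((l - 1 : ℕ) : ℤ))
        (c : E r s'' t''),
        cast (congrArg₂ (E r) h h') (SS.d r s'' t'' c) =
          K.iter r s t (l - 1) a) ∧
    ((∀ l' : ℕ, l' < l →
        ¬ ∃ (s' t' : ℤ) (h : s' + (r : ℤ) = s + 4 * (l' : ℤ))
          (h' : t' + (r : ℤ) - 1 = t + 24 * (l' : ℤ)) (b : E r s' t'),
          cast (congrArg₂ (E r) h h') (SS.d r s' t' b) = K.iter r s t l' a) →
      ∀ (s' t' : ℤ) (h : s' + (r : ℤ) = s + 4 * (l : ℤ))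
        (h' : t' + (r : ℤ) - 1 = t + 24 * (l : ℤ)) (b : E r s' t'),
        cast (congrArg₂ (E r) h h') (SS.d r s' t' b) = K.iter r s t l a →
        s' ≤ 3) := by
  obtain ⟨m, rfl⟩ : ∃ m, l = m + 1 := ⟨l - 1, by omega⟩
  simp only [Nat.add_sub_cancel]
  refine ⟨kd_descent K hyp r hr m s t a, fun hmin s' t' h h' b hb => ?_⟩
  by_contra hs3
  exact hmin m (by omega)
    (kd_descent K hyp r hr m s t a ⟨s', t', h, h', b, by omega, hb⟩)
end

section
/- Let E be a spectral sequence of abelian groups equipped with an operator D of bidegree (0,192). Assume that E_2^{s,t} = 0 whenever t − s < 0, that D : E_2^{s,t} → E_2^{s,t+192} is injective for all s, t, and that every element of E_2^{s,t} with t − s ≥ 192 is divisible by D. Then for every r ≥ 2: (1) D : E_r^{s,t} → E_r^{s,t+192} is injective for all s, t; (2) every element of E_r^{s,t} with t − s ≥ 192 is divisible by D; and (3) if a ∈ E_r and D a is a d_r-cycle, then a is a d_r-cycle. -/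
/-- An operator `D` of bidegree `(0, 192)` on a spectral sequence: a family of
group homomorphisms commuting with the differentials and compatible with the
identification of the `(r+1)`-st pages with the homology of the `r`-th pages.
(In the paper, `D` is multiplication by `Δ⁸` on the elliptic spectral sequence
for `tmf ∧ Y`.) -/
structure DeltaOp {E : ℕ → ℤ → ℤ → Type} [∀ r s t, AddCommGroup (E r s t)]
    (SS : SpectralSequence E) where
  D : ∀ (r : ℕ) (s t : ℤ), E r s t →+ E r s (t + 192)
  comm_d : ∀ (r : ℕ) (s t : ℤ) (x : E r s t),
    SS.d r s (t + 192) (D r s t x) =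
      cast (congrArg₂ (E r) rfl (by ring))
        (D r (s + r) (t + r - 1) (SS.d r s t x))
  comm_pageMap : ∀ (r : ℕ) (s t : ℤ) (x : E r s t) (hx : SS.d r s t x = 0)
    (hDx : SS.d r s (t + 192) (D r s t x) = 0),
    D (r + 1) s t (SS.pageMap r s t x hx) =
      SS.pageMap r s (t + 192) (D r s t x) hDx

section Aux

variable {E : ℕ → ℤ → ℤ → Type} [∀ r s t, AddCommGroup (E r s t)]

private lemma castE_eq_zero_iff {r : ℕ} {s s' t t' : ℤ} (hs : s = s') (ht : t = t')
    (e : E r s t = E r s' t') (x : E r s t) : cast e x = 0 ↔ x = 0 := by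
  subst hs; subst ht
  constructor <;> intro h <;> simpa using h

private lemma pm_congr (SS : SpectralSequence E) {r : ℕ} {s t : ℤ} {x y : E r s t}
    (hxy : x = y) (hx : SS.d r s t x = 0) (hy : SS.d r s t y = 0) :
    SS.pageMap r s t x hx = SS.pageMap r s t y hy := by
  subst hxy; rfl

private lemma pm_zero (SS : SpectralSequence E) (r : ℕ) (s t : ℤ)
    (h : SS.d r s t (0 : E r s t) = 0) : SS.pageMap r s t 0 h = 0 := by
  have h2 := SS.pageMap_add r s t 0 0 h h (by simpa using h)
  have h3 : SS.pageMap r s t ((0 : E r s t) + 0) (by simpa using h)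
      = SS.pageMap r s t 0 h := pm_congr SS (add_zero 0) _ _
  have h4 : SS.pageMap r s t 0 h + 0 = SS.pageMap r s t 0 h + SS.pageMap r s t 0 h := by
    simpa using (h3.symm.trans h2)
  exact (add_left_cancel h4).symm

end Aux

/-- If `E₂` vanishes in negative stems, `D : E₂^{s,t} → E₂^{s,t+192}` is
injective, and every element of `E₂` in stems `≥ 192` is `D`-divisible, then
for every `r ≥ 2`: (1) `D` is injective on `E_r`; (2) every element of `E_r`
in stems `≥ 192` is `D`-divisible; (3) if `D a` is a `d_r`-cycle then `a` is a
`d_r`-cycle. -/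


theorem deltaOp_injective_divisible_cycle {E : ℕ → ℤ → ℤ → Type}
    [∀ r s t, AddCommGroup (E r s t)]
    {SS : SpectralSequence E} (D : DeltaOp SS)
    (hvanish : ∀ s t : ℤ, t - s < 0 → ∀ x : E 2 s t, x = 0)
    (hinj : ∀ s t : ℤ, Function.Injective (D.D 2 s t))
    (hdiv : ∀ (s t : ℤ) (x : E 2 s t), 192 ≤ t - s →
      ∃ (t' : ℤ) (h : t' + 192 = t) (y : E 2 s t'),
        cast (congrArg₂ (E 2) rfl h) (D.D 2 s t' y) = x) :
    ∀ r : ℕ, 2 ≤ r →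
      (∀ s t : ℤ, Function.Injective (D.D r s t)) ∧
      (∀ (s t : ℤ) (x : E r s t), 192 ≤ t - s →
        ∃ (t' : ℤ) (h : t' + 192 = t) (y : E r s t'),
          cast (congrArg₂ (E r) rfl h) (D.D r s t' y) = x) ∧
      (∀ (s t : ℤ) (a : E r s t),
        SS.d r s (t + 192) (D.D r s t a) = 0 → SS.d r s t a = 0) := by
  -- First prove the strengthened statement including vanishing, by induction.
  have main : ∀ r : ℕ, 2 ≤ r →
      (∀ s t : ℤ, t - s < 0 → ∀ x : E r s t, x = 0) ∧
      (∀ s t : ℤ, Function.Injective (D.D r s t)) ∧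
      (∀ (s t : ℤ) (x : E r s t), 192 ≤ t - s →
        ∃ (t' : ℤ) (h : t' + 192 = t) (y : E r s t'),
          cast (congrArg₂ (E r) rfl h) (D.D r s t' y) = x) := by
    intro r hr
    induction r, hr using Nat.le_induction with
    | base => exact ⟨hvanish, hinj, hdiv⟩
    | succ r hr ih =>
      obtain ⟨V, I, Dv⟩ := ih
      -- the cycle property at page r, derived from injectivity at page r
      have cyc : ∀ (s t : ℤ) (a : E r s t),
          SS.d r s (t + 192) (D.D r s t a) = 0 → SS.d r s t a = 0 := by
        intro s t a h
        rw [D.comm_d r s t a] at h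
        have h2 : D.D r (s + (r : ℤ)) (t + (r : ℤ) - 1) (SS.d r s t a) = 0 :=
          (castE_eq_zero_iff rfl (by ring) _ _).mp h
        exact I _ _ (h2.trans (map_zero _).symm)
      refine ⟨?_, ?_, ?_⟩
      · -- vanishing at page r+1
        intro s t hst x
        obtain ⟨y, hy, hxy⟩ := SS.pageMap_surjective r s t x
        have hy0 : y = 0 := V s t hst y
        rw [← hxy]
        exact (pm_congr SS hy0 hy (map_zero _)).trans (pm_zero SS r s t _)
      · -- injectivity at page r+1
        intro s t
        refine (injective_iff_map_eq_zero _).mpr ?_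
        intro a' ha'
        obtain ⟨x, hx, hxeq⟩ := SS.pageMap_surjective r s t a'
        rw [← hxeq]
        by_cases hneg : t - s < 0
        · have hx0 : x = 0 := V s t hneg x
          exact (pm_congr SS hx0 hx (map_zero _)).trans (pm_zero SS r s t _)
        · have hDx : SS.d r s (t + 192) (D.D r s t x) = 0 := by
            rw [D.comm_d r s t x, hx, map_zero]
            exact (castE_eq_zero_iff rfl (by ring) _ _).mpr rfl
          have h0 : SS.pageMap r s (t + 192) (D.D r s t x) hDx = 0 := by
            rw [← D.comm_pageMap r s t x hx hDx, hxeq, ha']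
          obtain ⟨s', t', hs, ht, w, hw⟩ :=
            (SS.pageMap_eq_zero_iff r s (t + 192) (D.D r s t x) hDx).mp h0
          subst hs
          have hstem : 192 ≤ t' - s' := by omega
          obtain ⟨t'', h192, v, hv⟩ := Dv s' t' w hstem
          subst h192
          have htt : t = t'' + (r : ℤ) - 1 := by omega
          subst htt
          have hv' : D.D r s' t'' v = w := eq_of_heq (cast_eq_iff_heq.mp hv)
          have h1 : HEq (SS.d r s' (t'' + 192) w)
              (D.D r (s' + (r : ℤ)) (t'' + (r : ℤ) - 1) x) := cast_eq_iff_heq.mp hw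
          have h2 : HEq (D.D r (s' + (r : ℤ)) (t'' + (r : ℤ) - 1) (SS.d r s' t'' v))
              (SS.d r s' (t'' + 192) w) := by
            rw [← hv', D.comm_d r s' t'' v]
            exact (cast_heq _ _).symm
          have h3 : D.D r (s' + (r : ℤ)) (t'' + (r : ℤ) - 1) (SS.d r s' t'' v)
              = D.D r (s' + (r : ℤ)) (t'' + (r : ℤ) - 1) x := eq_of_heq (h2.trans h1)
          have h4 : SS.d r s' t'' v = x := I _ _ h3
          exact (SS.pageMap_eq_zero_iff r _ _ x hx).mpr
            ⟨s', t'', rfl, rfl, v, cast_eq_iff_heq.mpr (heq_of_eq h4)⟩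
      · -- divisibility at page r+1
        intro s t x' hst
        obtain ⟨x, hx, hxeq⟩ := SS.pageMap_surjective r s t x'
        obtain ⟨t', h192, y, hy⟩ := Dv s t x hst
        subst h192
        have hy' : D.D r s t' y = x := eq_of_heq (cast_eq_iff_heq.mp hy)
        have hDy : SS.d r s (t' + 192) (D.D r s t' y) = 0 := by rw [hy']; exact hx
        have hyc : SS.d r s t' y = 0 := cyc s t' y hDy
        refine ⟨t', rfl, SS.pageMap r s t' y hyc, cast_eq_iff_heq.mpr (heq_of_eq ?_)⟩
        rw [D.comm_pageMap r s t' y hyc hDy, ← hxeq]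
        exact pm_congr SS hy' hDy hx
  intro r hr
  obtain ⟨V, I, Dv⟩ := main r hr
  refine ⟨I, Dv, ?_⟩
  intro s t a h
  rw [D.comm_d r s t a] at h
  have h2 : D.D r (s + (r : ℤ)) (t + (r : ℤ) - 1) (SS.d r s t a) = 0 :=
    (castE_eq_zero_iff rfl (by ring) _ _).mp h
  exact I _ _ (h2.trans (map_zero _).symm)
end
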